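/- Let Ω := ℂ ∖ ([i, i∞) ∪ (−i∞, −i] ∪ (−∞, −√17/8) ∪ (√17/8, ∞)). There exist functions k₁, k₂ : Ω → ℂ, with k₂ holomorphic on Ω and k₁ continuous on Ω and holomorphic on Ω ∖ {√17/8, −√17/8}, such that: (i) P(k_j(z), z) = 0 for all z ∈ Ω and j = 1, 2; (ii) for real x ∈ (−√17/8, √17/8), k₁(x) = i·√(9/4 − 2√(1+x²)) and k₂(x) = i·√(9/4 + 2√(1+x²)); (iii) Im k₁(z) > 0 and Im k₂(z) > 0 for every z ∈ Ω with Im z ≠ 0; (iv) for real x with x > √17/8, lim_{y→0⁺} k₁(x+iy) = √2·√(√(x²+1) − 9/8) and lim_{y→0⁻} k₁(x+iy) = −√2·√(√(x²+1) − 9/8), while for real x with x < −√17/8, lim_{y→0⁺} k₁(x+iy) = −√2·√(√(x²+1) − 9/8) and lim_{y→0⁻} k₁(x+iy) = √2·√(√(x²+1) − 9/8); (v) for all real x with |x| > √17/8, lim_{y→0⁺} k₂(x+iy) = lim_{y→0⁻} k₂(x+iy) = i·√2·√(√(x²+1) + 9/8). -/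
import Mathlib


open Filter Set Topology

/-- The quartic `P(k,z) = (1/4)k⁴ + (9/8)k² + 17/64 − z²`. -/
noncomputable def Pquart (k z : ℂ) : ℂ := (1/4) * k ^ 4 + (9/8) * k ^ 2 + 17/64 - z ^ 2

/-- `Ω = ℂ ∖ ([i, i∞) ∪ (−i∞, −i] ∪ (−∞, −√17/8) ∪ (√17/8, ∞))`. -/
def OmegaSet : Set ℂ :=
  {z : ℂ | ¬ ((z.re = 0 ∧ 1 ≤ z.im) ∨ (z.re = 0 ∧ z.im ≤ -1) ∨
      (z.im = 0 ∧ z.re < -(Real.sqrt 17 / 8)) ∨ (z.im = 0 ∧ Real.sqrt 17 / 8 < z.re))}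

/-! ### Auxiliary: the principal complex square root `cs ζ = ζ ^ (1/2)` -/

noncomputable def cs (ζ : ℂ) : ℂ := ζ ^ (((1:ℝ)/2 : ℝ) : ℂ)

lemma cs_zero : cs 0 = 0 := by
  simp [cs, Complex.zero_cpow, Complex.ofReal_ne_zero]

lemma cs_sq (ζ : ℂ) : cs ζ ^ 2 = ζ := by
  rcases eq_or_ne ζ 0 with rfl | hζ
  · simp [cs_zero]
  · rw [cs, sq, ← Complex.cpow_add _ _ hζ]
    norm_num

lemma cs_eq_exp {ζ : ℂ} (hζ : ζ ≠ 0) :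
    cs ζ = Complex.exp (Complex.log ζ * (((1:ℝ)/2 : ℝ) : ℂ)) :=
  Complex.cpow_def_of_ne_zero hζ _

lemma cs_arg_im {ζ : ℂ} :
    (Complex.log ζ * (((1:ℝ)/2 : ℝ) : ℂ)).im = ζ.arg / 2 := by
  simp [Complex.mul_im, Complex.log_im]
  ring

lemma cs_re_nonneg (ζ : ℂ) : 0 ≤ (cs ζ).re := by
  rcases eq_or_ne ζ 0 with rfl | hζ
  · simp [cs_zero]
  · rw [cs_eq_exp hζ, Complex.exp_re, cs_arg_im]
    refine mul_nonneg (Real.exp_pos _).le (Real.cos_nonneg_of_mem_Icc ⟨?_, ?_⟩)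
    · have := Complex.neg_pi_lt_arg ζ; linarith
    · have := Complex.arg_le_pi ζ; linarith

lemma cs_re_pos {ζ : ℂ} (h : ζ ∈ Complex.slitPlane) : 0 < (cs ζ).re := by
  have hζ : ζ ≠ 0 := Complex.slitPlane_ne_zero h
  rw [cs_eq_exp hζ, Complex.exp_re, cs_arg_im]
  refine mul_pos (Real.exp_pos _) (Real.cos_pos_of_mem_Ioo ⟨?_, ?_⟩)
  · have := Complex.neg_pi_lt_arg ζ; linarith
  · have h1 := Complex.arg_le_pi ζ
    have h2 : ζ.arg ≠ Real.pi := Complex.slitPlane_arg_ne_pi h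
    have := Real.pi_pos
    cases lt_or_eq_of_le h1 with
    | inl h => linarith
    | inr h => exact absurd h h2

lemma cs_im_pos {ζ : ℂ} (h : 0 < ζ.im) : 0 < (cs ζ).im := by
  have hζ : ζ ≠ 0 := fun h0 => by simp [h0] at h
  rw [cs_eq_exp hζ, Complex.exp_im, cs_arg_im]
  have harg0 : 0 ≤ ζ.arg := Complex.arg_nonneg_iff.2 h.le
  have harg : 0 < ζ.arg := by
    rcases harg0.lt_or_eq with h' | h'
    · exact h'
    · exfalso
      have := Complex.arg_eq_zero_iff.1 h'.symm
      exact absurd this.2 (ne_of_gt h)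
  have hpi := Complex.arg_le_pi ζ
  have := Real.pi_pos
  refine mul_pos (Real.exp_pos _) (Real.sin_pos_of_pos_of_lt_pi (by linarith) (by linarith))

lemma cs_im_neg {ζ : ℂ} (h : ζ.im < 0) : (cs ζ).im < 0 := by
  have hζ : ζ ≠ 0 := fun h0 => by simp [h0] at h
  rw [cs_eq_exp hζ, Complex.exp_im, cs_arg_im]
  have harg : ζ.arg < 0 := Complex.arg_neg_iff.2 h
  have hpi := Complex.neg_pi_lt_arg ζ
  have := Real.pi_pos
  have hs : Real.sin (ζ.arg / 2) < 0 :=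
    Real.sin_neg_of_neg_of_neg_pi_lt (by linarith) (by linarith)
  exact mul_neg_of_pos_of_neg (Real.exp_pos _) hs

lemma cs_ofReal {x : ℝ} (hx : 0 ≤ x) : cs (x : ℂ) = ((Real.sqrt x : ℝ) : ℂ) := by
  rw [cs, ← Complex.ofReal_cpow hx, Real.sqrt_eq_rpow]

lemma sqrt_unique {s t : ℂ} (h : s ^ 2 = t ^ 2) (hs : 0 < s.re) (ht : 0 < t.re) : s = t := by
  have h2 : (s - t) * (s + t) = 0 := by linear_combination h
  rcases mul_eq_zero.1 h2 with h' | h'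
  · exact sub_eq_zero.1 h'
  · exfalso
    have hst : s = -t := by linear_combination h'
    have : s.re = -t.re := by rw [hst]; simp
    linarith

lemma cs_of_im_neg {ζ : ℂ} (h : ζ.im < 0) : cs ζ = -Complex.I * cs (-ζ) := by
  have him : 0 < (-ζ).im := by simp [h]
  refine sqrt_unique ?_ (cs_re_pos (Or.inr (ne_of_lt h))) ?_
  · rw [cs_sq, mul_pow, cs_sq]
    simp [Complex.I_sq]
  · have := cs_im_pos him
    simp [Complex.mul_re]
    linarith

lemma cs_of_im_pos {ζ : ℂ} (h : 0 < ζ.im) : cs ζ = Complex.I * cs (-ζ) := by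
  have him : (-ζ).im < 0 := by simp [h]
  refine sqrt_unique ?_ (cs_re_pos (Or.inr (ne_of_gt h))) ?_
  · rw [cs_sq]
    have h2 := cs_sq (-ζ)
    rw [mul_pow, h2, Complex.I_sq]
    ring
  · have := cs_im_neg him
    simp [Complex.mul_re]
    linarith

lemma cs_contAt_zero : ContinuousAt cs 0 := by
  have h : ContinuousAt (fun p : ℂ × ℂ => p.1 ^ p.2) (0, (((1:ℝ)/2 : ℝ) : ℂ)) :=
    Complex.continuousAt_cpow_zero_of_re_pos (by norm_num)
  have h2 : ContinuousAt (fun x : ℂ => (x, (((1:ℝ)/2 : ℝ) : ℂ))) 0 :=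
    (continuous_id.prodMk continuous_const).continuousAt
  exact ContinuousAt.comp (f := fun x : ℂ => (x, (((1:ℝ)/2 : ℝ) : ℂ))) h h2

/-! ### The branch functions -/

noncomputable def wfun (z : ℂ) : ℂ := cs (1 + z ^ 2)

noncomputable def K1 (z : ℂ) : ℂ := Complex.I * cs (9/4 - 2 * wfun z)

noncomputable def K2 (z : ℂ) : ℂ := Complex.I * cs (9/4 + 2 * wfun z)

lemma wfun_sq (z : ℂ) : wfun z ^ 2 = 1 + z ^ 2 := cs_sq _

lemma wfun_ofReal (x : ℝ) : wfun (x : ℂ) = ((Real.sqrt (1 + x ^ 2) : ℝ) : ℂ) := by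
  have h : (1 + (x:ℂ) ^ 2) = (((1 + x ^ 2 : ℝ)) : ℂ) := by push_cast; ring
  rw [wfun, h, cs_ofReal (by positivity)]


/-! ### Structural helpers -/

lemma sq_re (z : ℂ) : (z^2).re = z.re^2 - z.im^2 := by rw [sq, Complex.mul_re]; ring

lemma sq_im (z : ℂ) : (z^2).im = 2*(z.re*z.im) := by rw [sq, Complex.mul_im]; ring

lemma I_mul_im (u : ℂ) : (Complex.I * u).im = u.re := by simp

lemma hsq17 : (Real.sqrt 17 / 8)^2 = 17/64 := by
  rw [div_pow, Real.sq_sqrt (by norm_num : (17:ℝ) ≥ 0)]; norm_num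

lemma wfun_re_nonneg (z : ℂ) : 0 ≤ (wfun z).re := cs_re_nonneg _

lemma omega_slit {z : ℂ} (hz : z ∈ OmegaSet) : (1 + z^2) ∈ Complex.slitPlane := by
  simp only [OmegaSet, Set.mem_setOf_eq] at hz; push_neg at hz
  obtain ⟨h1, h2, h3, h4⟩ := hz
  have hre : (1+z^2).re = 1 + z.re^2 - z.im^2 := by simp [sq_re]; ring
  have him : (1+z^2).im = 2*(z.re*z.im) := by simp [sq_im]
  by_cases hre0 : z.re = 0
  · left
    have hi1 := h1 hre0; have hi2 := h2 hre0
    rw [hre, hre0]; nlinarith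
  · by_cases him0 : z.im = 0
    · left; rw [hre, him0]; nlinarith
    · right; rw [him]
      exact mul_ne_zero two_ne_zero (mul_ne_zero hre0 him0)

lemma slit1 {z : ℂ} (hz : z ∈ OmegaSet) (hne1 : z ≠ ((Real.sqrt 17 / 8 : ℝ) : ℂ))
    (hne2 : z ≠ ((-(Real.sqrt 17 / 8) : ℝ) : ℂ)) :
    (9/4 - 2 * wfun z) ∈ Complex.slitPlane := by
  by_cases hwim : (wfun z).im = 0
  · left
    set a := (wfun z).re with ha
    have hw : wfun z = (a : ℂ) := by
      apply Complex.ext <;> simp [hwim, ha]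
    have hsq : ((a^2 : ℝ) : ℂ) = 1 + z^2 := by push_cast; rw [← hw]; exact wfun_sq z
    have hre : a^2 = 1 + z.re^2 - z.im^2 := by
      have := congrArg Complex.re hsq
      simp only [Complex.ofReal_re, Complex.add_re, Complex.one_re, sq_re] at this
      linarith
    have him0 : 2*(z.re*z.im) = 0 := by
      have := congrArg Complex.im hsq
      simpa [sq_im] using this.symm
    have hanneg : 0 ≤ a := cs_re_nonneg _
    have hgoal : ((9:ℂ)/4 - 2*wfun z).re = 9/4 - 2*a := by rw [hw]; simp
    rw [hgoal]
    have key : 1 + z.re^2 - z.im^2 < 81/64 := by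
      have hprod : z.re * z.im = 0 := by linarith
      rcases mul_eq_zero.1 hprod with h0 | h0
      · rw [h0]; nlinarith
      · simp only [OmegaSet, Set.mem_setOf_eq] at hz; push_neg at hz
        obtain ⟨_, _, h3, h4⟩ := hz
        have hle1 := h3 h0
        have hle2 := h4 h0
        have hr1 : z.re ≠ Real.sqrt 17 / 8 := by
          intro h; exact hne1 (Complex.ext (by simpa using h) (by simpa using h0))
        have hr2 : z.re ≠ -(Real.sqrt 17 / 8) := by
          intro h; exact hne2 (Complex.ext (by simpa using h) (by simpa using h0))
        have hlt1 : z.re < Real.sqrt 17 / 8 := lt_of_le_of_ne hle2 hr1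
        have hlt2 : -(Real.sqrt 17 / 8) < z.re := lt_of_le_of_ne hle1 (Ne.symm hr2)
        have : z.re^2 < 17/64 := by nlinarith [hsq17]
        rw [h0]; nlinarith
    nlinarith
  · right
    have hcalc : ((9:ℂ)/4 - 2*wfun z).im = -(2*(wfun z).im) := by simp
    rw [hcalc]
    intro hc; apply hwim; linarith

lemma slit2 (z : ℂ) : (9/4 + 2 * wfun z) ∈ Complex.slitPlane := by
  left
  have : ((9:ℂ)/4 + 2*wfun z).re = 9/4 + 2*(wfun z).re := by simp
  rw [this]
  linarith [wfun_re_nonneg z]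

lemma wfun_contAt {z : ℂ} (h : (1 + z^2) ∈ Complex.slitPlane) : ContinuousAt wfun z :=
  ContinuousAt.cpow ((continuous_const.add (continuous_pow 2)).continuousAt)
    continuousAt_const h

lemma wfun_diffAt {z : ℂ} (h : (1 + z^2) ∈ Complex.slitPlane) : DifferentiableAt ℂ wfun z :=
  DifferentiableAt.cpow ((differentiableAt_const _).add (differentiableAt_pow 2))
    (differentiableAt_const _) h

lemma inner1_contAt {z : ℂ} (h : (1 + z^2) ∈ Complex.slitPlane) :
    ContinuousAt (fun z : ℂ => 9/4 - 2 * wfun z) z :=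
  continuousAt_const.sub (continuousAt_const.mul (wfun_contAt h))

lemma K1_contAt {z : ℂ} (h1 : (1 + z^2) ∈ Complex.slitPlane)
    (h2 : (9/4 - 2 * wfun z) ∈ Complex.slitPlane) : ContinuousAt K1 z :=
  continuousAt_const.mul (ContinuousAt.cpow (inner1_contAt h1) continuousAt_const h2)

lemma K2_contAt {z : ℂ} (h1 : (1 + z^2) ∈ Complex.slitPlane) : ContinuousAt K2 z :=
  continuousAt_const.mul
    (ContinuousAt.cpow (continuousAt_const.add (continuousAt_const.mul (wfun_contAt h1)))
      continuousAt_const (slit2 z))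

lemma K1_diffAt {z : ℂ} (h1 : (1 + z^2) ∈ Complex.slitPlane)
    (h2 : (9/4 - 2 * wfun z) ∈ Complex.slitPlane) : DifferentiableAt ℂ K1 z :=
  (differentiableAt_const _).mul
    (DifferentiableAt.cpow
      ((differentiableAt_const _).sub ((differentiableAt_const _).mul (wfun_diffAt h1)))
      (differentiableAt_const _) h2)

lemma K2_diffAt {z : ℂ} (h1 : (1 + z^2) ∈ Complex.slitPlane) : DifferentiableAt ℂ K2 z :=
  (differentiableAt_const _).mul
    (DifferentiableAt.cpow
      ((differentiableAt_const _).add ((differentiableAt_const _).mul (wfun_diffAt h1)))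
      (differentiableAt_const _) (slit2 z))

lemma real_slit (x : ℝ) : (1 + (x:ℂ)^2) ∈ Complex.slitPlane := by
  left
  have : (1 + (x:ℂ)^2).re = 1 + x^2 := by
    rw [Complex.add_re, sq_re]; simp
  rw [this]; positivity

lemma root_wfun {x : ℝ} (hx : x^2 = 17/64) : wfun (x:ℂ) = ((9:ℂ)/8) := by
  rw [wfun_ofReal]
  have h1 : 1 + x^2 = (9/8:ℝ)^2 := by rw [hx]; norm_num
  rw [h1, Real.sqrt_sq (by norm_num : (0:ℝ) ≤ 9/8)]
  push_cast; ring

lemma K1_contAt_root {x : ℝ} (hx : x^2 = 17/64) : ContinuousAt K1 ((x:ℝ):ℂ) := by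
  have hin := inner1_contAt (real_slit x)
  have hval : (9:ℂ)/4 - 2 * wfun (x:ℂ) = 0 := by rw [root_wfun hx]; norm_num
  have hcs : ContinuousAt cs ((9:ℂ)/4 - 2 * wfun (x:ℂ)) := by
    rw [hval]; exact cs_contAt_zero
  exact continuousAt_const.mul (ContinuousAt.comp (f := fun z : ℂ => 9/4 - 2 * wfun z) hcs hin)

/-! ### Branch identities -/

lemma K1_sq (z : ℂ) : K1 z ^ 2 = 2 * wfun z - 9/4 := by
  rw [K1, mul_pow, Complex.I_sq, cs_sq]; ring

lemma K2_sq (z : ℂ) : K2 z ^ 2 = -(9/4) - 2 * wfun z := by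
  rw [K2, mul_pow, Complex.I_sq, cs_sq]; ring

lemma K1_pos_branch {z : ℂ} (h : 0 < z.re * z.im) : K1 z = cs (2 * wfun z - 9/4) := by
  have him : 0 < (1 + z^2).im := by
    have : (1+z^2).im = 2*(z.re*z.im) := by simp [sq_im]
    rw [this]; linarith
  have hwim : 0 < (wfun z).im := cs_im_pos him
  have h2 : ((9:ℂ)/4 - 2 * wfun z).im < 0 := by
    have : ((9:ℂ)/4 - 2*wfun z).im = -(2*(wfun z).im) := by simp
    rw [this]; linarith
  rw [K1, cs_of_im_neg h2]
  have hneg : -((9:ℂ)/4 - 2*wfun z) = 2 * wfun z - 9/4 := by ring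
  rw [hneg, ← mul_assoc]
  simp

lemma K1_neg_branch {z : ℂ} (h : z.re * z.im < 0) : K1 z = - cs (2 * wfun z - 9/4) := by
  have him : (1 + z^2).im < 0 := by
    have : (1+z^2).im = 2*(z.re*z.im) := by simp [sq_im]
    rw [this]; linarith
  have hwim : (wfun z).im < 0 := cs_im_neg him
  have h2 : 0 < ((9:ℂ)/4 - 2 * wfun z).im := by
    have : ((9:ℂ)/4 - 2*wfun z).im = -(2*(wfun z).im) := by simp
    rw [this]; linarith
  rw [K1, cs_of_im_pos h2]
  have hneg : -((9:ℂ)/4 - 2*wfun z) = 2 * wfun z - 9/4 := by ring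
  rw [hneg, ← mul_assoc, Complex.I_mul_I]
  ring

/-! ### The main limit computation -/

lemma sqrt_big {x : ℝ} (hx : 17/64 < x^2) : 9/8 < Real.sqrt (1 + x^2) := by
  rw [show (9/8:ℝ) = Real.sqrt ((9/8)^2) from (Real.sqrt_sq (by norm_num)).symm]
  apply Real.sqrt_lt_sqrt (by positivity)
  nlinarith

lemma target_eq {x : ℝ} :
    Real.sqrt 2 * Real.sqrt (Real.sqrt (x^2+1) - 9/8)
      = Real.sqrt (2 * Real.sqrt (1 + x^2) - 9/4) := by
  rw [← Real.sqrt_mul (by norm_num : (0:ℝ) ≤ 2)]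
  rw [show x^2 + 1 = 1 + x^2 from by ring]
  norm_num [mul_sub]

lemma target_eq2 {x : ℝ} :
    Real.sqrt 2 * Real.sqrt (Real.sqrt (x^2+1) + 9/8)
      = Real.sqrt (9/4 + 2 * Real.sqrt (1 + x^2)) := by
  rw [← Real.sqrt_mul (by norm_num : (0:ℝ) ≤ 2)]
  rw [show x^2 + 1 = 1 + x^2 from by ring]
  norm_num [mul_add]
  ring_nf

lemma path_tendsto (x : ℝ) :
    Tendsto (fun y : ℝ => (x:ℂ) + (y:ℂ) * Complex.I) (nhds 0) (nhds (x:ℂ)) := by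
  have h : ContinuousAt (fun y : ℝ => (x:ℂ) + (y:ℂ) * Complex.I) 0 :=
    (continuous_const.add (Complex.continuous_ofReal.mul continuous_const)).continuousAt
  simpa using h.tendsto

lemma limit_main {x : ℝ} (hx : 17/64 < x^2) :
    Tendsto (fun y : ℝ => cs (2 * wfun ((x:ℂ) + (y:ℂ) * Complex.I) - 9/4)) (nhds 0)
      (nhds ((Real.sqrt 2 * Real.sqrt (Real.sqrt (x^2+1) - 9/8) : ℝ) : ℂ)) := by
  have hval : 2 * wfun (x:ℂ) - 9/4 = (((2 * Real.sqrt (1+x^2) - 9/4 : ℝ)) : ℂ) := by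
    rw [wfun_ofReal]; push_cast; ring
  have hpos : (0:ℝ) < 2 * Real.sqrt (1+x^2) - 9/4 := by
    have := sqrt_big hx; linarith
  have hslit2 : (2 * wfun (x:ℂ) - 9/4) ∈ Complex.slitPlane := by
    rw [hval]; left; simpa using hpos
  have hin : ContinuousAt (fun z : ℂ => 2 * wfun z - 9/4) (x:ℂ) :=
    (continuousAt_const.mul (wfun_contAt (real_slit x))).sub continuousAt_const
  have hcs : ContinuousAt cs (2 * wfun (x:ℂ) - 9/4) :=
    ContinuousAt.cpow continuousAt_id continuousAt_const hslit2
  have hcomp : ContinuousAt (fun z : ℂ => cs (2 * wfun z - 9/4)) (x:ℂ) :=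
    ContinuousAt.comp (f := fun z : ℂ => 2 * wfun z - 9/4) hcs hin
  have H := hcomp.tendsto.comp (path_tendsto x)
  have hval2 : cs (2 * wfun (x:ℂ) - 9/4)
      = ((Real.sqrt 2 * Real.sqrt (Real.sqrt (x^2+1) - 9/8) : ℝ) : ℂ) := by
    rw [hval, cs_ofReal hpos.le, target_eq]
  rw [hval2] at H
  exact H

lemma K2_real (x : ℝ) :
    K2 (x:ℂ) = Complex.I * ((Real.sqrt 2 * Real.sqrt (Real.sqrt (x^2+1) + 9/8) : ℝ) : ℂ) := by
  rw [K2, wfun_ofReal]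
  have h : (9:ℂ)/4 + 2*((Real.sqrt (1+x^2) : ℝ):ℂ) = (((9/4 + 2*Real.sqrt (1+x^2) : ℝ)):ℂ) := by
    push_cast; ring
  rw [h, cs_ofReal (by positivity), target_eq2]

lemma K2_tendsto (x : ℝ) :
    Tendsto (fun y : ℝ => K2 ((x:ℂ) + (y:ℂ) * Complex.I)) (nhds 0)
      (nhds (Complex.I * ((Real.sqrt 2 * Real.sqrt (Real.sqrt (x^2+1) + 9/8) : ℝ) : ℂ))) := by
  have H := (K2_contAt (real_slit x)).tendsto.comp (path_tendsto x)
  rw [K2_real x] at H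
  exact H

lemma pz_re (x y : ℝ) : ((x:ℂ) + (y:ℂ)*Complex.I).re = x := by simp

lemma pz_im (x y : ℝ) : ((x:ℂ) + (y:ℂ)*Complex.I).im = y := by simp

lemma hspos : (0:ℝ) < Real.sqrt 17 / 8 := by positivity

theorem roots_k1_k2 :
    ∃ k₁ k₂ : ℂ → ℂ,
      ContinuousOn k₁ OmegaSet ∧
      DifferentiableOn ℂ k₁
        (OmegaSet \ {((Real.sqrt 17 / 8 : ℝ) : ℂ), ((-(Real.sqrt 17 / 8) : ℝ) : ℂ)}) ∧
      DifferentiableOn ℂ k₂ OmegaSet ∧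
      -- (i)
      (∀ z ∈ OmegaSet, Pquart (k₁ z) z = 0 ∧ Pquart (k₂ z) z = 0) ∧
      -- (ii)
      (∀ x : ℝ, -(Real.sqrt 17 / 8) < x → x < Real.sqrt 17 / 8 →
        k₁ (x : ℂ) = Complex.I * (Real.sqrt (9/4 - 2 * Real.sqrt (1 + x ^ 2)) : ℝ) ∧
        k₂ (x : ℂ) = Complex.I * (Real.sqrt (9/4 + 2 * Real.sqrt (1 + x ^ 2)) : ℝ)) ∧
      -- (iii)
      (∀ z ∈ OmegaSet, z.im ≠ 0 → 0 < (k₁ z).im ∧ 0 < (k₂ z).im) ∧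
      -- (iv), x > √17/8
      (∀ x : ℝ, Real.sqrt 17 / 8 < x →
        Tendsto (fun y : ℝ => k₁ ((x : ℂ) + (y : ℂ) * Complex.I))
          (nhdsWithin 0 (Set.Ioi 0))
          (nhds ((Real.sqrt 2 * Real.sqrt (Real.sqrt (x ^ 2 + 1) - 9/8) : ℝ) : ℂ)) ∧
        Tendsto (fun y : ℝ => k₁ ((x : ℂ) + (y : ℂ) * Complex.I))
          (nhdsWithin 0 (Set.Iio 0))
          (nhds (-((Real.sqrt 2 * Real.sqrt (Real.sqrt (x ^ 2 + 1) - 9/8) : ℝ) : ℂ)))) ∧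
      -- (iv), x < −√17/8
      (∀ x : ℝ, x < -(Real.sqrt 17 / 8) →
        Tendsto (fun y : ℝ => k₁ ((x : ℂ) + (y : ℂ) * Complex.I))
          (nhdsWithin 0 (Set.Ioi 0))
          (nhds (-((Real.sqrt 2 * Real.sqrt (Real.sqrt (x ^ 2 + 1) - 9/8) : ℝ) : ℂ))) ∧
        Tendsto (fun y : ℝ => k₁ ((x : ℂ) + (y : ℂ) * Complex.I))
          (nhdsWithin 0 (Set.Iio 0))
          (nhds ((Real.sqrt 2 * Real.sqrt (Real.sqrt (x ^ 2 + 1) - 9/8) : ℝ) : ℂ))) ∧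
      -- (v)
      (∀ x : ℝ, Real.sqrt 17 / 8 < |x| →
        Tendsto (fun y : ℝ => k₂ ((x : ℂ) + (y : ℂ) * Complex.I))
          (nhdsWithin 0 (Set.Ioi 0))
          (nhds (Complex.I *
            ((Real.sqrt 2 * Real.sqrt (Real.sqrt (x ^ 2 + 1) + 9/8) : ℝ) : ℂ))) ∧
        Tendsto (fun y : ℝ => k₂ ((x : ℂ) + (y : ℂ) * Complex.I))
          (nhdsWithin 0 (Set.Iio 0))
          (nhds (Complex.I *
            ((Real.sqrt 2 * Real.sqrt (Real.sqrt (x ^ 2 + 1) + 9/8) : ℝ) : ℂ)))) := by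
  refine ⟨K1, K2, ?_, ?_, ?_, ?_, ?_, ?_, ?_, ?_, ?_⟩
  · -- ContinuousOn K1
    intro z hz
    by_cases h1 : z = ((Real.sqrt 17 / 8 : ℝ) : ℂ)
    · subst h1; exact (K1_contAt_root hsq17).continuousWithinAt
    · by_cases h2 : z = ((-(Real.sqrt 17 / 8) : ℝ) : ℂ)
      · subst h2
        exact (K1_contAt_root (by rw [neg_pow]; simpa using hsq17)).continuousWithinAt
      · exact (K1_contAt (omega_slit hz) (slit1 hz h1 h2)).continuousWithinAt
  · -- DifferentiableOn K1
    intro z hz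
    obtain ⟨hzΩ, hzn⟩ := hz
    simp only [Set.mem_insert_iff, Set.mem_singleton_iff] at hzn
    push_neg at hzn
    exact (K1_diffAt (omega_slit hzΩ) (slit1 hzΩ hzn.1 hzn.2)).differentiableWithinAt
  · -- DifferentiableOn K2
    intro z hz
    exact (K2_diffAt (omega_slit hz)).differentiableWithinAt
  · -- (i)
    intro z _
    refine ⟨?_, ?_⟩
    · have hk2 := K1_sq z
      have hk4 : K1 z ^ 4 = (2 * wfun z - 9/4)^2 := by
        rw [show (4:ℕ) = 2*2 from rfl, pow_mul, hk2]
      have hw := wfun_sq z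
      simp only [Pquart]
      linear_combination (1/4) * hk4 + (9/8) * hk2 + hw
    · have hk2 := K2_sq z
      have hk4 : K2 z ^ 4 = (-(9/4) - 2 * wfun z)^2 := by
        rw [show (4:ℕ) = 2*2 from rfl, pow_mul, hk2]
      have hw := wfun_sq z
      simp only [Pquart]
      linear_combination (1/4) * hk4 + (9/8) * hk2 + hw
  · -- (ii)
    intro x hx1 hx2
    have hxsq : x^2 < 17/64 := by nlinarith [hsq17, hspos]
    have ha : Real.sqrt (1+x^2) < 9/8 := by
      rw [show (9/8:ℝ) = Real.sqrt ((9/8)^2) from (Real.sqrt_sq (by norm_num)).symm]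
      apply Real.sqrt_lt_sqrt (by positivity)
      nlinarith
    have hpos : (0:ℝ) ≤ 9/4 - 2*Real.sqrt (1+x^2) := by linarith
    refine ⟨?_, ?_⟩
    · rw [K1, wfun_ofReal]
      have h : (9:ℂ)/4 - 2*((Real.sqrt (1+x^2):ℝ):ℂ)
          = (((9/4 - 2*Real.sqrt (1+x^2) : ℝ)):ℂ) := by push_cast; ring
      rw [h, cs_ofReal hpos]
    · rw [K2, wfun_ofReal]
      have h : (9:ℂ)/4 + 2*((Real.sqrt (1+x^2):ℝ):ℂ)
          = (((9/4 + 2*Real.sqrt (1+x^2) : ℝ)):ℂ) := by push_cast; ring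
      rw [h, cs_ofReal (by positivity)]
  · -- (iii)
    intro z hz him
    have h1 : z ≠ ((Real.sqrt 17 / 8 : ℝ) : ℂ) := by
      intro h; rw [h] at him; simp at him
    have h2 : z ≠ ((-(Real.sqrt 17 / 8) : ℝ) : ℂ) := by
      intro h; rw [h] at him; simp at him
    refine ⟨?_, ?_⟩
    · have hp := cs_re_pos (slit1 hz h1 h2)
      have hgoal : (K1 z).im = (cs (9/4 - 2*wfun z)).re := by
        simp only [K1]; rw [I_mul_im]
      rw [hgoal]; exact hp
    · have hp := cs_re_pos (slit2 z)
      have hgoal : (K2 z).im = (cs (9/4 + 2*wfun z)).re := by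
        simp only [K2]; rw [I_mul_im]
      rw [hgoal]; exact hp
  · -- (iv), x > √17/8
    intro x hx
    have hxpos : 0 < x := lt_trans hspos hx
    have hxsq : 17/64 < x^2 := by nlinarith [hsq17, hspos]
    refine ⟨?_, ?_⟩
    · have hEq : (fun y : ℝ => cs (2 * wfun ((x:ℂ)+(y:ℂ)*Complex.I) - 9/4))
          =ᶠ[nhdsWithin 0 (Set.Ioi 0)] (fun y : ℝ => K1 ((x:ℂ)+(y:ℂ)*Complex.I)) := by
        filter_upwards [self_mem_nhdsWithin] with y hy
        refine (K1_pos_branch ?_).symm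
        rw [pz_re, pz_im]
        exact mul_pos hxpos hy
      exact Filter.Tendsto.congr' hEq ((limit_main hxsq).mono_left nhdsWithin_le_nhds)
    · have hEq : (fun y : ℝ => -cs (2 * wfun ((x:ℂ)+(y:ℂ)*Complex.I) - 9/4))
          =ᶠ[nhdsWithin 0 (Set.Iio 0)] (fun y : ℝ => K1 ((x:ℂ)+(y:ℂ)*Complex.I)) := by
        filter_upwards [self_mem_nhdsWithin] with y hy
        refine (K1_neg_branch ?_).symm
        rw [pz_re, pz_im]
        exact mul_neg_of_pos_of_neg hxpos hy
      exact Filter.Tendsto.congr' hEq ((limit_main hxsq).neg.mono_left nhdsWithin_le_nhds)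
  · -- (iv), x < −√17/8
    intro x hx
    have hxneg : x < 0 := lt_trans hx (by linarith [hspos])
    have hxsq : 17/64 < x^2 := by nlinarith [hsq17, hspos]
    refine ⟨?_, ?_⟩
    · have hEq : (fun y : ℝ => -cs (2 * wfun ((x:ℂ)+(y:ℂ)*Complex.I) - 9/4))
          =ᶠ[nhdsWithin 0 (Set.Ioi 0)] (fun y : ℝ => K1 ((x:ℂ)+(y:ℂ)*Complex.I)) := by
        filter_upwards [self_mem_nhdsWithin] with y hy
        refine (K1_neg_branch ?_).symm
        rw [pz_re, pz_im]
        exact mul_neg_of_neg_of_pos hxneg hy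
      exact Filter.Tendsto.congr' hEq ((limit_main hxsq).neg.mono_left nhdsWithin_le_nhds)
    · have hEq : (fun y : ℝ => cs (2 * wfun ((x:ℂ)+(y:ℂ)*Complex.I) - 9/4))
          =ᶠ[nhdsWithin 0 (Set.Iio 0)] (fun y : ℝ => K1 ((x:ℂ)+(y:ℂ)*Complex.I)) := by
        filter_upwards [self_mem_nhdsWithin] with y hy
        refine (K1_pos_branch ?_).symm
        rw [pz_re, pz_im]
        exact mul_pos_of_neg_of_neg hxneg hy
      exact Filter.Tendsto.congr' hEq ((limit_main hxsq).mono_left nhdsWithin_le_nhds)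
  · -- (v)
    intro x _
    exact ⟨(K2_tendsto x).mono_left nhdsWithin_le_nhds,
      (K2_tendsto x).mono_left nhdsWithin_le_nhds⟩
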